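/- arXiv:2206.14893 — 7 statements merged into one kernel-verified Lean document; each statement's English description precedes it below -/
import Mathlib

section
/- Every admissible map of the m×n influence network is equivariant under the group Γ = S_m × S_n: if G is admissible, then for every permutation σ of the rows, every permutation τ of the columns, and every real m×n matrix z, one has G((σ,τ)·z) = (σ,τ)·G(z). -/
open Finset

/-- The action of `(σ, τ) ∈ S_m × S_n` on `m × n` real matrices:
`((σ,τ)·z)_{ij} = z_{σ⁻¹(i) τ⁻¹(j)}`. -/
def influenceAct {m n : ℕ} (σ : Equiv.Perm (Fin m)) (τ : Equiv.Perm (Fin n))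
    (z : Fin m → Fin n → ℝ) : Fin m → Fin n → ℝ :=
  fun i j => z (σ⁻¹ i) (τ⁻¹ j)

/-- The multiset `{z_{il} : l ≠ j}` of the other entries of row `i`. -/
def rowMS {m n : ℕ} {Y : Type*} (z : Fin m → Fin n → Y) (i : Fin m) (j : Fin n) : Multiset Y :=
  (Finset.univ.filter (fun l => l ≠ j)).val.map (fun l => z i l)

/-- The multiset `{z_{kj} : k ≠ i}` of the other entries of column `j`. -/
def colMS {m n : ℕ} {Y : Type*} (z : Fin m → Fin n → Y) (i : Fin m) (j : Fin n) : Multiset Y :=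
  (Finset.univ.filter (fun k => k ≠ i)).val.map (fun k => z k j)

/-- The multiset `{z_{kl} : k ≠ i, l ≠ j}` of the remaining entries. -/
def diagMS {m n : ℕ} {Y : Type*} (z : Fin m → Fin n → Y) (i : Fin m) (j : Fin n) : Multiset Y :=
  ((Finset.univ.filter (fun k => k ≠ i)) ×ˢ (Finset.univ.filter (fun l => l ≠ j))).val.map
    (fun p => z p.1 p.2)

/-- A map `G` on `m × n` real matrices is admissible for the influence network if all its
components are given by a single function of the node value and the three multisets of
row, column, and diagonal input values. -/
def IsAdmissible {m n : ℕ} (G : (Fin m → Fin n → ℝ) → (Fin m → Fin n → ℝ)) : Prop :=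
  ∃ g : ℝ → Multiset ℝ → Multiset ℝ → Multiset ℝ → ℝ,
    ∀ z i j, G z i j = g (z i j) (rowMS z i j) (colMS z i j) (diagMS z i j)

theorem Finset.map_filter_ne_univ {α : Type*} [Fintype α] [DecidableEq α] (e : Equiv.Perm α)
    (a : α) : (univ.filter (· ≠ a)).map e.toEmbedding = univ.filter (· ≠ e a) := by
  rw [filter_ne', filter_ne', map_erase, map_univ_equiv]
  rfl

section Reindex

variable {m n : ℕ} {Y : Type*} (σ : Equiv.Perm (Fin m)) (τ : Equiv.Perm (Fin n))
  (z : Fin m → Fin n → Y) (i : Fin m) (j : Fin n)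

theorem rowMS_reindex : rowMS (fun k l => z (σ k) (τ l)) i j = rowMS z (σ i) (τ j) := by
  rw [rowMS, rowMS, ← map_filter_ne_univ, map_val, Multiset.map_map]
  rfl

theorem colMS_reindex : colMS (fun k l => z (σ k) (τ l)) i j = colMS z (σ i) (τ j) := by
  rw [colMS, colMS, ← map_filter_ne_univ, map_val, Multiset.map_map]
  rfl

theorem diagMS_reindex : diagMS (fun k l => z (σ k) (τ l)) i j = diagMS z (σ i) (τ j) := by
  rw [diagMS, diagMS, ← map_filter_ne_univ, ← map_filter_ne_univ, ← prodMap_map_product,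
    map_val, Multiset.map_map]
  rfl

end Reindex

theorem admissible_is_equivariant_general (m n : ℕ)
    (G : (Fin m → Fin n → ℝ) → (Fin m → Fin n → ℝ)) (hG : IsAdmissible G)
    (σ : Equiv.Perm (Fin m)) (τ : Equiv.Perm (Fin n)) (z : Fin m → Fin n → ℝ) :
    G (influenceAct σ τ z) = influenceAct σ τ (G z) := by
  obtain ⟨g, hg⟩ := hG
  funext i j
  unfold influenceAct
  rw [hg, hg, rowMS_reindex, colMS_reindex, diagMS_reindex]

/-- every admissible map of the `m × n` influence network is
`S_m × S_n`-equivariant. -/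
theorem admissible_is_equivariant (m n : ℕ) (hm : 1 ≤ m) (hn : 1 ≤ n)
    (G : (Fin m → Fin n → ℝ) → (Fin m → Fin n → ℝ)) (hG : IsAdmissible G)
    (σ : Equiv.Perm (Fin m)) (τ : Equiv.Perm (Fin n)) (z : Fin m → Fin n → ℝ) :
    G (influenceAct σ τ z) = influenceAct σ τ (G z) :=
  admissible_is_equivariant_general m n G hG σ τ z
end

section
/- Let m, n ≥ 1. A linear map L on the space of real m×n matrices commutes with the action of Γ = S_m × S_n if and only if there exist real numbers α, β, γ, δ such that for all z and all i, j: L(z)_{ij} = α·z_{ij} + β·Σ_{l≠j} z_{il} + γ·Σ_{k≠i} z_{kj} + δ·Σ_{k≠i, l≠j} z_{kl}. In particular, every linear Γ-equivariant map on m×n matrices is admissible for the influence network. -/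
open Finset

/-! The kernel `c i j k l = L (E_{kl}) i j` (`E_{kl}` a matrix unit) of an equivariant linear map
is invariant under the diagonal action of `S_m × S_n`. Since a symmetric group moves any pair
`(i, k)` to any other pair with the same equality pattern, `c i j k l` depends only on whether
`i = k` and whether `j = l`, and its four values are `α, β, γ, δ`. Conversely a kernel of this
shape is invariant, and the resulting map reads only the entry and the sums of the three
multisets, so it is admissible. -/

lemma Equiv.Perm.exists_apply_eq_and_apply_eq {N : Type*} [DecidableEq N] {i k i' k' : N}
    (h : i = k ↔ i' = k') : ∃ σ : Equiv.Perm N, σ i = i' ∧ σ k = k' := by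
  by_cases hik : i = k
  · subst hik
    obtain rfl := h.mp rfl
    exact ⟨Equiv.swap i' i, Equiv.swap_apply_right _ _, Equiv.swap_apply_right _ _⟩
  · set ρ := Equiv.swap i' i
    have hρk : ρ k ≠ i' := fun e =>
      hik (ρ.injective (e.trans (Equiv.swap_apply_right i' i).symm)).symm
    refine ⟨Equiv.swap k' (ρ k) * ρ, ?_, Equiv.swap_apply_right _ _⟩
    rw [Equiv.Perm.mul_apply, Equiv.swap_apply_right,
      Equiv.swap_apply_of_ne_of_ne (mt h.mpr hik) hρk.symm]

lemma exists_bool_factorization_of_perm_invariant {M N Y : Type*} [DecidableEq M] [DecidableEq N]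
    [Nonempty Y] (c : M → N → M → N → Y)
    (hc : ∀ (σ : Equiv.Perm M) (τ : Equiv.Perm N) i j k l,
      c (σ i) (τ j) (σ k) (τ l) = c i j k l) :
    ∃ f : Bool → Bool → Y, ∀ i j k l, c i j k l = f (decide (i = k)) (decide (j = l)) := by
  let pattern : M × N × M × N → Bool × Bool := fun q =>
    (decide (q.1 = q.2.2.1), decide (q.2.1 = q.2.2.2))
  let c' : M × N × M × N → Y := fun q => c q.1 q.2.1 q.2.2.1 q.2.2.2
  have hfac : c'.FactorsThrough pattern := by
    rintro ⟨i, j, k, l⟩ ⟨i', j', k', l'⟩ hq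
    simp only [pattern, Prod.mk.injEq, decide_eq_decide] at hq
    obtain ⟨σ, rfl, rfl⟩ := Equiv.Perm.exists_apply_eq_and_apply_eq hq.1
    obtain ⟨τ, rfl, rfl⟩ := Equiv.Perm.exists_apply_eq_and_apply_eq hq.2
    exact (hc σ τ i j k l).symm
  -- patterns that no quadruple realises (`i ≠ k` when `M` is a singleton) get an arbitrary value
  refine ⟨fun b b' => Function.extend pattern c' (fun _ => Classical.arbitrary Y) (b, b'),
    fun i j k l => ?_⟩
  exact (hfac.extend_apply _ (i, j, k, l)).symm

lemma sum_mul_decide_eq {N R : Type*} [Fintype N] [DecidableEq N] [CommSemiring R]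
    (w : N → R) (h : Bool → R) (j : N) :
    ∑ l, w l * h (decide (j = l)) =
      w j * h true + (∑ l ∈ univ.filter (· ≠ j), w l) * h false := by
  rw [← add_sum_erase _ _ (mem_univ j), filter_ne', sum_mul, decide_eq_true rfl]
  congr 1
  refine sum_congr rfl fun l hl => ?_
  rw [decide_eq_false (ne_of_mem_erase hl).symm]

lemma LinearMap.apply_eq_sum_sum_single {M N R X : Type*} [Fintype M] [Fintype N] [DecidableEq M]
    [DecidableEq N] [Semiring R] [AddCommMonoid X] [Module R X] (L : (M → N → R) →ₗ[R] X)
    (z : M → N → R) : L z = ∑ k, ∑ l, z k l • L (Pi.single k (Pi.single l 1)) := by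
  have hz : z = ∑ k, ∑ l, z k l • Pi.single k (Pi.single l (1 : R)) := by
    ext a b
    simp [Finset.sum_apply, Pi.single_apply, ite_apply]
  conv_lhs => rw [hz]
  simp only [map_sum, map_smul]

section Influence

variable {m n : ℕ}

def IsInfluenceEquivariant (G : (Fin m → Fin n → ℝ) → (Fin m → Fin n → ℝ)) : Prop :=
  ∀ σ τ z, G (influenceAct σ τ z) = influenceAct σ τ (G z)

def influenceForm (α β γ δ : ℝ) (z : Fin m → Fin n → ℝ) : Fin m → Fin n → ℝ :=
  fun i j => α * z i j + β * ∑ l ∈ Finset.univ.filter (fun l => l ≠ j), z i l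
    + γ * ∑ k ∈ Finset.univ.filter (fun k => k ≠ i), z k j
    + δ * ∑ p ∈ (Finset.univ.filter (fun k => k ≠ i)) ×ˢ
        (Finset.univ.filter (fun l => l ≠ j)), z p.1 p.2

def invariantKernelMap (f : Bool → Bool → ℝ) (z : Fin m → Fin n → ℝ) :
    Fin m → Fin n → ℝ :=
  fun i j => ∑ k, ∑ l, z k l * f (decide (i = k)) (decide (j = l))

lemma invariantKernelMap_eq_influenceForm (f : Bool → Bool → ℝ) :
    invariantKernelMap (m := m) (n := n) f =
      influenceForm (f true true) (f true false) (f false true) (f false false) := by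
  funext z i j
  have hrows : ∀ k, ∑ l, z k l * f (decide (i = k)) (decide (j = l)) =
      z k j * f (decide (i = k)) true
        + (∑ l ∈ univ.filter (· ≠ j), z k l) * f (decide (i = k)) false :=
    fun k => sum_mul_decide_eq (z k) (f (decide (i = k))) j
  simp only [invariantKernelMap, influenceForm, sum_product, hrows, sum_add_distrib]
  rw [sum_mul_decide_eq (fun k => z k j) (f · true),
    sum_mul_decide_eq (fun k => ∑ l ∈ univ.filter (· ≠ j), z k l) (f · false)]
  ring

lemma isInfluenceEquivariant_invariantKernelMap (f : Bool → Bool → ℝ) :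
    IsInfluenceEquivariant (invariantKernelMap (m := m) (n := n) f) := by
  intro σ τ z
  funext i j
  simp only [invariantKernelMap, influenceAct]
  rw [← Equiv.sum_comp σ]
  refine sum_congr rfl fun k _ => ?_
  rw [← Equiv.sum_comp τ]
  simp only [Equiv.Perm.coe_inv, Equiv.symm_apply_apply, Equiv.symm_apply_eq]

lemma influenceAct_single (σ : Equiv.Perm (Fin m)) (τ : Equiv.Perm (Fin n)) (k : Fin m)
    (l : Fin n) (x : ℝ) :
    influenceAct σ τ (Pi.single k (Pi.single l x)) = Pi.single (σ k) (Pi.single (τ l) x) := by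
  ext a b
  simp only [influenceAct, Pi.single_apply, Equiv.Perm.coe_inv, Equiv.symm_apply_eq,
    Pi.zero_apply, ite_apply]

lemma exists_eq_invariantKernelMap_of_isInfluenceEquivariant
    {L : (Fin m → Fin n → ℝ) →ₗ[ℝ] (Fin m → Fin n → ℝ)}
    (hL : IsInfluenceEquivariant L) :
    ∃ f : Bool → Bool → ℝ, ⇑L = invariantKernelMap f := by
  have hinv (σ : Equiv.Perm (Fin m)) (τ : Equiv.Perm (Fin n)) i j k l :
      L (Pi.single (σ k) (Pi.single (τ l) 1)) (σ i) (τ j) =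
        L (Pi.single k (Pi.single l 1)) i j := by
    rw [← influenceAct_single, hL]
    simp only [influenceAct, Equiv.Perm.coe_inv, Equiv.symm_apply_apply]
  obtain ⟨f, hf⟩ := exists_bool_factorization_of_perm_invariant
    (fun i j k l => L (Pi.single k (Pi.single l 1)) i j) hinv
  refine ⟨f, funext fun z => funext fun i => funext fun j => ?_⟩
  rw [L.apply_eq_sum_sum_single z]
  simp only [Finset.sum_apply, Pi.smul_apply, smul_eq_mul, hf, invariantKernelMap]

lemma isInfluenceEquivariant_iff_exists_eq_influenceForm
    (L : (Fin m → Fin n → ℝ) →ₗ[ℝ] (Fin m → Fin n → ℝ)) :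
    IsInfluenceEquivariant L ↔ ∃ α β γ δ : ℝ, ⇑L = influenceForm α β γ δ := by
  constructor
  · intro hL
    obtain ⟨f, hf⟩ := exists_eq_invariantKernelMap_of_isInfluenceEquivariant hL
    exact ⟨_, _, _, _, hf.trans (invariantKernelMap_eq_influenceForm f)⟩
  · rintro ⟨α, β, γ, δ, hL⟩
    let f : Bool → Bool → ℝ := fun b b' => cond b (cond b' α β) (cond b' γ δ)
    rw [hL, show influenceForm α β γ δ = invariantKernelMap f from
      (invariantKernelMap_eq_influenceForm f).symm]
    exact isInfluenceEquivariant_invariantKernelMap _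

lemma isAdmissible_influenceForm (α β γ δ : ℝ) :
    IsAdmissible (influenceForm (m := m) (n := n) α β γ δ) :=
  ⟨fun x row col rest => α * x + β * row.sum + γ * col.sum + δ * rest.sum, fun _ _ _ => rfl⟩

end Influence

theorem linear_equivariant_iff_admissible_form_general (m n : ℕ)
    (L : (Fin m → Fin n → ℝ) →ₗ[ℝ] (Fin m → Fin n → ℝ)) :
    ((∀ (σ : Equiv.Perm (Fin m)) (τ : Equiv.Perm (Fin n)) (z : Fin m → Fin n → ℝ),
        L (influenceAct σ τ z) = influenceAct σ τ (L z)) ↔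
      (∃ α β γ δ : ℝ, ∀ (z : Fin m → Fin n → ℝ) (i : Fin m) (j : Fin n),
        L z i j = α * z i j + β * ∑ l ∈ Finset.univ.filter (fun l => l ≠ j), z i l
          + γ * ∑ k ∈ Finset.univ.filter (fun k => k ≠ i), z k j
          + δ * ∑ p ∈ (Finset.univ.filter (fun k => k ≠ i)) ×ˢ
              (Finset.univ.filter (fun l => l ≠ j)), z p.1 p.2)) ∧
    ((∀ (σ : Equiv.Perm (Fin m)) (τ : Equiv.Perm (Fin n)) (z : Fin m → Fin n → ℝ),
        L (influenceAct σ τ z) = influenceAct σ τ (L z)) →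
      IsAdmissible (fun z => L z)) := by
  have key := isInfluenceEquivariant_iff_exists_eq_influenceForm L
  refine ⟨by simp only [funext_iff] at key; exact key, fun hL => ?_⟩
  obtain ⟨α, β, γ, δ, hform⟩ := key.mp hL
  exact hform ▸ isAdmissible_influenceForm α β γ δ

/-- a linear map on `m × n` real matrices is `S_m × S_n`-equivariant iff it has
the form `L(z)_{ij} = α z_{ij} + β Σ_{l≠j} z_{il} + γ Σ_{k≠i} z_{kj} + δ Σ_{k≠i,l≠j} z_{kl}`;
in particular every linear equivariant map is admissible. -/
theorem linear_equivariant_iff_admissible_form (m n : ℕ) (hm : 1 ≤ m) (hn : 1 ≤ n)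
    (L : (Fin m → Fin n → ℝ) →ₗ[ℝ] (Fin m → Fin n → ℝ)) :
    ((∀ (σ : Equiv.Perm (Fin m)) (τ : Equiv.Perm (Fin n)) (z : Fin m → Fin n → ℝ),
        L (influenceAct σ τ z) = influenceAct σ τ (L z)) ↔
      (∃ α β γ δ : ℝ, ∀ (z : Fin m → Fin n → ℝ) (i : Fin m) (j : Fin n),
        L z i j = α * z i j + β * ∑ l ∈ Finset.univ.filter (fun l => l ≠ j), z i l
          + γ * ∑ k ∈ Finset.univ.filter (fun k => k ≠ i), z k j
          + δ * ∑ p ∈ (Finset.univ.filter (fun k => k ≠ i)) ×ˢ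
              (Finset.univ.filter (fun l => l ≠ j)), z p.1 p.2)) ∧
    ((∀ (σ : Equiv.Perm (Fin m)) (τ : Equiv.Perm (Fin n)) (z : Fin m → Fin n → ℝ),
        L (influenceAct σ τ z) = influenceAct σ τ (L z)) →
      IsAdmissible (fun z => L z)) :=
  linear_equivariant_iff_admissible_form_general m n L
end

section
/- Let m, n ≥ 1 and let α, β, γ, δ be real numbers. Define the linear map L on real m×n matrices by L(z)_{ij} = α·z_{ij} + β·Σ_{l≠j} z_{il} + γ·Σ_{k≠i} z_{kj} + δ·Σ_{k≠i, l≠j} z_{kl}. Then L restricts to scalar multiplication on each of the four subspaces: L(z) = c_d·z for z ∈ V_d with c_d = α − β − γ + δ; L(z) = c_c·z for z ∈ V_c with c_c = α − β + (m−1)(γ − δ); L(z) = c_dl·z for z ∈ V_dl with c_dl = α − γ + (n−1)(β − δ); and L(z) = c_s·z for z ∈ V_s with c_s = α + (n−1)β + (m−1)γ + (m−1)(n−1)δ. -/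
open Finset

/-- `V_s`: matrices with all entries equal (fully synchronous subspace). -/
def Vs (m n : ℕ) : Submodule ℝ (Fin m → Fin n → ℝ) where
  carrier := {z | ∀ i j k l, z i j = z k l}
  add_mem' := by
    intro a b ha hb i j k l
    simp only [Pi.add_apply]
    rw [ha i j k l, hb i j k l]
  zero_mem' := by intro i j k l; rfl
  smul_mem' := by
    intro c a ha i j k l
    simp only [Pi.smul_apply, smul_eq_mul]
    rw [ha i j k l]

/-- `V_c`: matrices all of whose rows are equal, and every row sums to `0`
(consensus subspace). -/
def Vc (m n : ℕ) : Submodule ℝ (Fin m → Fin n → ℝ) where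
  carrier := {z | (∀ i k j, z i j = z k j) ∧ (∀ i, ∑ j, z i j = 0)}
  add_mem' := by
    rintro a b ⟨ha1, ha2⟩ ⟨hb1, hb2⟩
    constructor
    · intro i k j
      simp only [Pi.add_apply]
      rw [ha1 i k j, hb1 i k j]
    · intro i
      simp only [Pi.add_apply, Finset.sum_add_distrib, ha2 i, hb2 i, add_zero]
  zero_mem' := by
    constructor
    · intro i k j; rfl
    · intro i; simp
  smul_mem' := by
    rintro c a ⟨h1, h2⟩
    constructor
    · intro i k j
      simp only [Pi.smul_apply, smul_eq_mul]
      rw [h1 i k j]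
    · intro i
      simp only [Pi.smul_apply, smul_eq_mul, ← Finset.mul_sum, h2 i, mul_zero]

/-- `V_dl`: matrices all of whose columns are equal, and every column sums to `0`
(deadlock subspace). -/
def Vdl (m n : ℕ) : Submodule ℝ (Fin m → Fin n → ℝ) where
  carrier := {z | (∀ i j l, z i j = z i l) ∧ (∀ j, ∑ i, z i j = 0)}
  add_mem' := by
    rintro a b ⟨ha1, ha2⟩ ⟨hb1, hb2⟩
    constructor
    · intro i j l
      simp only [Pi.add_apply]
      rw [ha1 i j l, hb1 i j l]
    · intro j
      simp only [Pi.add_apply, Finset.sum_add_distrib, ha2 j, hb2 j, add_zero]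
  zero_mem' := by
    constructor
    · intro i j l; rfl
    · intro j; simp
  smul_mem' := by
    rintro c a ⟨h1, h2⟩
    constructor
    · intro i j l
      simp only [Pi.smul_apply, smul_eq_mul]
      rw [h1 i j l]
    · intro j
      simp only [Pi.smul_apply, smul_eq_mul, ← Finset.mul_sum, h2 j, mul_zero]

/-- `V_d`: matrices all of whose row sums and all of whose column sums are `0`
(dissensus subspace). -/
def Vd (m n : ℕ) : Submodule ℝ (Fin m → Fin n → ℝ) where
  carrier := {z | (∀ i, ∑ j, z i j = 0) ∧ (∀ j, ∑ i, z i j = 0)}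
  add_mem' := by
    rintro a b ⟨ha1, ha2⟩ ⟨hb1, hb2⟩
    constructor
    · intro i
      simp only [Pi.add_apply, Finset.sum_add_distrib, ha1 i, hb1 i, add_zero]
    · intro j
      simp only [Pi.add_apply, Finset.sum_add_distrib, ha2 j, hb2 j, add_zero]
  zero_mem' := by constructor <;> intro _ <;> simp
  smul_mem' := by
    rintro c a ⟨h1, h2⟩
    constructor
    · intro i
      simp only [Pi.smul_apply, smul_eq_mul, ← Finset.mul_sum, h1 i, mul_zero]
    · intro j
      simp only [Pi.smul_apply, smul_eq_mul, ← Finset.mul_sum, h2 j, mul_zero]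

/-!
Off-diagonal sums are full sums minus the excluded terms, so with row sums `Rᵢ`, column sums
`Cⱼ` and total `T`,
`L(z)ᵢⱼ = (α - β - γ + δ) zᵢⱼ + (β - δ) Rᵢ + (γ - δ) Cⱼ + δ T`.
On each of the four subspaces `Rᵢ`, `Cⱼ` and `T` are fixed multiples of `zᵢⱼ`
(`0`, `n zᵢⱼ`, `m zᵢⱼ` or `m n zᵢⱼ`), which gives the four eigenvalues.
-/

section OffDiagonalSums

variable {ι κ M : Type*} [Fintype ι] [Fintype κ] [DecidableEq ι] [DecidableEq κ]
  [AddCommGroup M]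

theorem sum_filter_ne_eq_sub (f : ι → M) (j : ι) :
    ∑ l ∈ univ.filter (fun l => l ≠ j), f l = ∑ l, f l - f j := by
  rw [filter_ne', sum_erase_eq_sub (mem_univ j)]

theorem sum_filter_ne_product_filter_ne (z : ι → κ → M) (i : ι) (j : κ) :
    ∑ p ∈ (univ.filter (fun k => k ≠ i)) ×ˢ (univ.filter (fun l => l ≠ j)), z p.1 p.2 =
      ∑ k, ∑ l, z k l - ∑ l, z i l - ∑ k, z k j + z i j := by
  simp only [sum_product, sum_filter_ne_eq_sub, sum_sub_distrib]
  abel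

end OffDiagonalSums

variable {m n : ℕ} {z : Fin m → Fin n → ℝ}

theorem Vc.sum_col_eq (hz : z ∈ Vc m n) (i : Fin m) (j : Fin n) :
    ∑ k, z k j = m * z i j := by
  simp [fun k => hz.1 k i j]

theorem Vdl.sum_row_eq (hz : z ∈ Vdl m n) (i : Fin m) (j : Fin n) :
    ∑ l, z i l = n * z i j := by
  simp [fun l => hz.1 i l j]

theorem Vdl.sum_sum_eq_zero (hz : z ∈ Vdl m n) : ∑ k, ∑ l, z k l = 0 := by
  rw [sum_comm]
  simp [hz.2]

theorem Vs.sum_row_eq (hz : z ∈ Vs m n) (i : Fin m) (j : Fin n) :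
    ∑ l, z i l = n * z i j := by
  simp [fun l => hz i l i j]

theorem Vs.sum_col_eq (hz : z ∈ Vs m n) (i : Fin m) (j : Fin n) :
    ∑ k, z k j = m * z i j := by
  simp [fun k => hz k j i j]

theorem Vs.sum_sum_eq (hz : z ∈ Vs m n) (i : Fin m) (j : Fin n) :
    ∑ k, ∑ l, z k l = m * n * z i j := by
  simp [fun k l => hz k l i j, mul_assoc]

theorem linear_admissible_eigenvalues_general (m n : ℕ)
    (α β γ δ : ℝ)
    (L : (Fin m → Fin n → ℝ) → (Fin m → Fin n → ℝ))
    (hL : ∀ (z : Fin m → Fin n → ℝ) (i : Fin m) (j : Fin n),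
      L z i j = α * z i j + β * ∑ l ∈ Finset.univ.filter (fun l => l ≠ j), z i l
        + γ * ∑ k ∈ Finset.univ.filter (fun k => k ≠ i), z k j
        + δ * ∑ p ∈ (Finset.univ.filter (fun k => k ≠ i)) ×ˢ
            (Finset.univ.filter (fun l => l ≠ j)), z p.1 p.2) :
    (∀ z ∈ Vd m n, L z = (α - β - γ + δ) • z) ∧
    (∀ z ∈ Vc m n, L z = (α - β + ((m : ℝ) - 1) * (γ - δ)) • z) ∧
    (∀ z ∈ Vdl m n, L z = (α - γ + ((n : ℝ) - 1) * (β - δ)) • z) ∧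
    (∀ z ∈ Vs m n,
      L z = (α + ((n : ℝ) - 1) * β + ((m : ℝ) - 1) * γ
        + ((m : ℝ) - 1) * ((n : ℝ) - 1) * δ) • z) := by
  have hL_sums : ∀ z i j, L z i j = (α - β - γ + δ) * z i j + (β - δ) * ∑ l, z i l
      + (γ - δ) * ∑ k, z k j + δ * ∑ k, ∑ l, z k l := by
    intro z i j
    rw [hL, sum_filter_ne_eq_sub, sum_filter_ne_eq_sub, sum_filter_ne_product_filter_ne]
    ring
  refine ⟨?_, ?_, ?_, ?_⟩ <;> intro z hz <;> funext i j <;>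
    simp only [hL_sums, Pi.smul_apply, smul_eq_mul]
  · simp only [hz.1, hz.2, sum_const_zero]
    ring
  · simp only [hz.2, Vc.sum_col_eq hz i j, sum_const_zero]
    ring
  · rw [Vdl.sum_row_eq hz i j, Vdl.sum_sum_eq_zero hz, hz.2]
    ring
  · rw [Vs.sum_row_eq hz i j, Vs.sum_col_eq hz i j, Vs.sum_sum_eq hz i j]
    ring

/-- the general linear admissible map
`L(z)_{ij} = α z_{ij} + β Σ_{l≠j} z_{il} + γ Σ_{k≠i} z_{kj} + δ Σ_{k≠i,l≠j} z_{kl}`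
acts as scalar multiplication by `c_d, c_c, c_dl, c_s` on `V_d, V_c, V_dl, V_s`
respectively. -/
theorem linear_admissible_eigenvalues (m n : ℕ) (hm : 1 ≤ m) (hn : 1 ≤ n)
    (α β γ δ : ℝ)
    (L : (Fin m → Fin n → ℝ) → (Fin m → Fin n → ℝ))
    (hL : ∀ (z : Fin m → Fin n → ℝ) (i : Fin m) (j : Fin n),
      L z i j = α * z i j + β * ∑ l ∈ Finset.univ.filter (fun l => l ≠ j), z i l
        + γ * ∑ k ∈ Finset.univ.filter (fun k => k ≠ i), z k j
        + δ * ∑ p ∈ (Finset.univ.filter (fun k => k ≠ i)) ×ˢ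
            (Finset.univ.filter (fun l => l ≠ j)), z p.1 p.2) :
    (∀ z ∈ Vd m n, L z = (α - β - γ + δ) • z) ∧
    (∀ z ∈ Vc m n, L z = (α - β + ((m : ℝ) - 1) * (γ - δ)) • z) ∧
    (∀ z ∈ Vdl m n, L z = (α - γ + ((n : ℝ) - 1) * (β - δ)) • z) ∧
    (∀ z ∈ Vs m n,
      L z = (α + ((n : ℝ) - 1) * β + ((m : ℝ) - 1) * γ
        + ((m : ℝ) - 1) * ((n : ℝ) - 1) * δ) • z) :=
  linear_admissible_eigenvalues_general m n α β γ δ L hL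
end

section
/- Let m, n ≥ 1. The 4×4 real matrix L = [[1, −1, −1, 1], [1, −1, m−1, 1−m], [1, n−1, −1, 1−n], [1, n−1, m−1, (m−1)(n−1)]], which sends the coefficient vector (α, β, γ, δ) to the eigenvalue vector (c_d, c_c, c_dl, c_s), has determinant −m²n²; in particular L is invertible, so for every prescribed quadruple of real numbers (c_d, c_c, c_dl, c_s) there exist unique reals α, β, γ, δ realizing those four eigenvalues. -/
/-!
Up to swapping its second and third rows, the matrix is the Kronecker product of
`!![1, -1; 1, m - 1]` with `!![1, -1; 1, n - 1]`, whose determinants are `m` and `n`.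
Hence its determinant is `-(m² n²)`, which is nonzero, and the matrix is invertible.
-/

open Matrix
open scoped Kronecker

theorem Matrix.existsUnique_mulVec_eq_of_isUnit {m R : Type*} [Fintype m] [DecidableEq m]
    [CommRing R] {A : Matrix m m R} (hA : IsUnit A) (c : m → R) : ∃! v, A *ᵥ v = c :=
  Function.Bijective.existsUnique
    ⟨mulVec_injective_of_isUnit hA, mulVec_surjective_iff_isUnit.mpr hA⟩ c

section EigenvalueMatrix

variable {R : Type*} [CommRing R]

def eigenvalueBlock (k : R) : Matrix (Fin 2) (Fin 2) R :=
  !![1, -1; 1, k - 1]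

theorem det_eigenvalueBlock (k : R) : (eigenvalueBlock k).det = k := by
  simp [eigenvalueBlock, det_fin_two_of]

def eigenvalueMatrix (a b : R) : Matrix (Fin 4) (Fin 4) R :=
  !![1, -1, -1, 1;
     1, -1, a - 1, 1 - a;
     1, b - 1, -1, 1 - b;
     1, b - 1, a - 1, (a - 1) * (b - 1)]

theorem eigenvalueMatrix_submatrix_swap (a b : R) :
    (eigenvalueMatrix a b).submatrix (Equiv.swap 1 2) id =
      reindex finProdFinEquiv finProdFinEquiv (eigenvalueBlock a ⊗ₖ eigenvalueBlock b) := by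
  ext i j
  fin_cases i <;> fin_cases j <;>
    simp [eigenvalueMatrix, eigenvalueBlock, finProdFinEquiv, Equiv.swap_apply_def,
      Fin.divNat, Fin.modNat]

theorem det_eigenvalueMatrix (a b : R) : (eigenvalueMatrix a b).det = -a ^ 2 * b ^ 2 := by
  have h := congrArg det (eigenvalueMatrix_submatrix_swap a b)
  rw [det_permute, det_reindex_self, det_kronecker, det_eigenvalueBlock, det_eigenvalueBlock,
    Equiv.Perm.sign_swap (by decide)] at h
  simp only [Units.val_neg, Units.val_one, Int.cast_neg, Int.cast_one, Fintype.card_fin] at h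
  linear_combination -h

end EigenvalueMatrix

/-- the 4×4 matrix sending the coefficients `(α, β, γ, δ)` of a linear
admissible map to its eigenvalues `(c_d, c_c, c_dl, c_s)` has determinant `-m²n²`;
in particular it is invertible, so every quadruple of eigenvalues is realized by a
unique coefficient vector. -/
theorem eigenvalue_matrix_det (m n : ℕ) (hm : 1 ≤ m) (hn : 1 ≤ n) :
    (Matrix.det
      !![(1 : ℝ), -1, -1, 1;
         1, -1, (m : ℝ) - 1, 1 - (m : ℝ);
         1, (n : ℝ) - 1, -1, 1 - (n : ℝ);
         1, (n : ℝ) - 1, (m : ℝ) - 1, ((m : ℝ) - 1) * ((n : ℝ) - 1)]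
      = -(m : ℝ) ^ 2 * (n : ℝ) ^ 2) ∧
    (∀ c : Fin 4 → ℝ, ∃! v : Fin 4 → ℝ,
      Matrix.mulVec
        !![(1 : ℝ), -1, -1, 1;
           1, -1, (m : ℝ) - 1, 1 - (m : ℝ);
           1, (n : ℝ) - 1, -1, 1 - (n : ℝ);
           1, (n : ℝ) - 1, (m : ℝ) - 1, ((m : ℝ) - 1) * ((n : ℝ) - 1)] v = c) := by
  have hdet : (eigenvalueMatrix (m : ℝ) n).det = -(m : ℝ) ^ 2 * (n : ℝ) ^ 2 :=
    det_eigenvalueMatrix _ _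
  have hm₀ : (m : ℝ) ≠ 0 := by exact_mod_cast Nat.one_le_iff_ne_zero.mp hm
  have hn₀ : (n : ℝ) ≠ 0 := by exact_mod_cast Nat.one_le_iff_ne_zero.mp hn
  have hunit : IsUnit (eigenvalueMatrix (m : ℝ) n) := by
    rw [isUnit_iff_isUnit_det, hdet, isUnit_iff_ne_zero]
    simp [hm₀, hn₀]
  exact ⟨hdet, existsUnique_mulVec_eq_of_isUnit hunit⟩
end

section
/- Let κ be a balanced coloring of the m×n array and let G be any admissible map of the m×n influence network. Then the synchrony subspace Δ_κ is invariant under G: if z ∈ Δ_κ then G(z) ∈ Δ_κ. -/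
/-!
A matrix constant on the color classes of `κ` is `f ∘ κ` for some `f`, and then each of
the three input multisets of `z` at `(i, j)` is the image under `f` of the corresponding
multiset of colors. Balance says that these color multisets, like the color itself, agree
at any two positions of the same color, so `g` receives identical arguments there.
-/

open Finset

/-- A coloring of the `m × n` array is balanced if same-colored nodes have
color-isomorphic input sets (balanced coloring), for each of the three arrow types. -/
def IsBalanced {m n : ℕ} {X : Type*} (κ : Fin m → Fin n → X) : Prop :=
  ∀ i j k l, κ i j = κ k l →
    rowMS κ i j = rowMS κ k l ∧ colMS κ i j = colMS κ k l ∧ diagMS κ i j = diagMS κ k l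

/-- The synchrony subspace of a coloring: matrices constant on each color class. -/
def synchronySet {m n : ℕ} {X : Type*} (κ : Fin m → Fin n → X) :
    Set (Fin m → Fin n → ℝ) :=
  {z | ∀ i j k l, κ i j = κ k l → z i j = z k l}

section Recoloring

variable {m n : ℕ} {X Y : Type*} (κ : Fin m → Fin n → X) (f : X → Y) (i : Fin m) (j : Fin n)

theorem rowMS_comp : rowMS (fun a b => f (κ a b)) i j = (rowMS κ i j).map f :=
  (Multiset.map_map _ _ _).symm

theorem colMS_comp : colMS (fun a b => f (κ a b)) i j = (colMS κ i j).map f :=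
  (Multiset.map_map _ _ _).symm

theorem diagMS_comp : diagMS (fun a b => f (κ a b)) i j = (diagMS κ i j).map f :=
  (Multiset.map_map _ _ _).symm

end Recoloring

theorem exists_eq_comp_of_mem_synchronySet {m n : ℕ} {X : Type*} {κ : Fin m → Fin n → X}
    {z : Fin m → Fin n → ℝ} (hz : z ∈ synchronySet κ) :
    ∃ f : X → ℝ, z = fun a b => f (κ a b) := by
  obtain ⟨f, hf⟩ := (Function.factorsThrough_iff (Function.uncurry z)).1
    fun p q h => hz p.1 p.2 q.1 q.2 h
  exact ⟨f, funext₂ fun a b => congrFun hf (a, b)⟩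

/-- if `κ` is a balanced coloring, then the synchrony subspace `Δ_κ` is
invariant under every admissible map of the influence network. -/
theorem balanced_synchrony_invariant (m n : ℕ) {X : Type*} (κ : Fin m → Fin n → X)
    (hκ : IsBalanced κ) (G : (Fin m → Fin n → ℝ) → (Fin m → Fin n → ℝ))
    (hG : IsAdmissible G) :
    ∀ z ∈ synchronySet κ, G z ∈ synchronySet κ := by
  intro z hz i j k l hcolor
  obtain ⟨f, rfl⟩ := exists_eq_comp_of_mem_synchronySet hz
  obtain ⟨g, hg⟩ := hG
  obtain ⟨hrow, hcol, hdiag⟩ := hκ i j k l hcolor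
  rw [hg, hg, rowMS_comp, rowMS_comp, colMS_comp, colMS_comp, diagMS_comp, diagMS_comp,
    hcolor, hrow, hcol, hdiag]
end

section
/- A coloring κ of the m×n array is balanced if and only if there exist a partition of the rows into classes R_1, …, R_s and a partition of the columns into classes C_1, …, C_t such that: (i) for each pair (a,b), the restriction of κ to the block R_a × C_b is a Latin rectangle (each color appears the same number of times in every row of the block and the same number of times in every column of the block), and (ii) distinct blocks R_a × C_b use disjoint sets of colors. -/
open Finset

open Function

/-
Writing `κ i j ::ₘ rowMS κ i j` for the whole of row `i`, and likewise for columns, balance says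
that same-colored cells lie in rows with the same color multiset and in columns with the same
color multiset; the third condition comes for free, because the multiset of the whole array is
the sum of row `i`, the rest of column `j` and `diagMS κ i j`. Grouping rows by their color
multiset and columns by theirs, every color determines the class of its row and of its column,
and then two rows of one class have the same color counts inside each column class (a color
occurs only inside a single column class). Conversely, summing the counts over the column
classes of a Latin decomposition recovers the full row multisets.
-/

theorem exists_surjective_fin_eq_iff {α β : Type*} [Finite α] (f : α → β) :
    ∃ (s : ℕ) (R : α → Fin s), Surjective R ∧ ∀ a b, R a = R b ↔ f a = f b := by
  let e := Finite.equivFin (Set.range f)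
  exact ⟨_, e ∘ Set.rangeFactorization f, e.surjective.comp Set.rangeFactorization_surjective,
    fun a b => e.injective.eq_iff.trans Subtype.ext_iff⟩

theorem card_filter_eq_sum_card_filter_and {β T : Type*} [Fintype β] [Fintype T] [DecidableEq T]
    (C : β → T) (p : β → Prop) [DecidablePred p] :
    #{j | p j} = ∑ b, #{j | C j = b ∧ p j} := by
  rw [card_eq_sum_card_fiberwise (f := C) (t := univ) fun _ _ => mem_univ _]
  simp only [filter_filter, and_comm]

theorem univ_val_eq_cons_filter_ne {ι : Type*} [Fintype ι] [DecidableEq ι] (j : ι) :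
    (univ : Finset ι).val = j ::ₘ (univ.filter (· ≠ j)).val := by
  rw [filter_ne', erase_val, Multiset.cons_erase (mem_univ j)]

section Rows

variable {α β X : Type*} [Fintype β]

def fullRowMS (κ : α → β → X) (i : α) : Multiset X :=
  univ.val.map (κ i)

theorem count_fullRowMS [DecidableEq X] (κ : α → β → X) (i : α) (c : X) :
    (fullRowMS κ i).count c = #{j | κ i j = c} := by
  rw [fullRowMS, Multiset.count_map, card_def, filter_val]
  simp only [eq_comm]

theorem fullRowMS_eq_iff_card_filter_and_eq {T : Type*} [Fintype T] [DecidableEq T]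
    [DecidableEq X] (κ : α → β → X) (C : β → T) (hC : ∀ i j k l, κ i j = κ k l → C j = C l)
    (i i' : α) :
    fullRowMS κ i = fullRowMS κ i' ↔
      ∀ b c, #{j | C j = b ∧ κ i j = c} = #{j | C j = b ∧ κ i' j = c} := by
  constructor
  · intro h b c
    obtain ⟨b₀, hb₀⟩ : ∃ b₀, ∀ k l, κ k l = c → C l = b₀ := by
      by_cases hc : ∃ k l, κ k l = c
      · obtain ⟨k, l, rfl⟩ := hc
        exact ⟨C l, fun k' l' h => hC k' l' k l h⟩
      · push Not at hc
        exact ⟨b, fun k l h => absurd h (hc k l)⟩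
    by_cases hb : b = b₀
    · subst hb
      rw [filter_congr fun j _ => and_iff_right_of_imp (hb₀ i j),
        filter_congr fun j _ => and_iff_right_of_imp (hb₀ i' j), ← count_fullRowMS,
        ← count_fullRowMS, h]
    · rw [filter_false_of_mem, filter_false_of_mem] <;>
        rintro j - ⟨rfl, hj⟩ <;> exact hb (hb₀ _ _ hj)
  · intro h
    ext c
    rw [count_fullRowMS, count_fullRowMS, card_filter_eq_sum_card_filter_and C,
      card_filter_eq_sum_card_filter_and C]
    exact sum_congr rfl fun b _ => h b c

end Rows

section Balanced

variable {m n : ℕ} {X : Type*}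

theorem fullRowMS_eq_cons (κ : Fin m → Fin n → X) (i : Fin m) (j : Fin n) :
    fullRowMS κ i = κ i j ::ₘ rowMS κ i j := by
  rw [fullRowMS, univ_val_eq_cons_filter_ne j, Multiset.map_cons, rowMS]

theorem fullRowMS_swap_eq_cons (κ : Fin m → Fin n → X) (i : Fin m) (j : Fin n) :
    fullRowMS (swap κ) j = κ i j ::ₘ colMS κ i j :=
  fullRowMS_eq_cons (swap κ) j i

theorem diagMS_eq_bind_rowMS (κ : Fin m → Fin n → X) (i : Fin m) (j : Fin n) :
    diagMS κ i j = (univ.filter (· ≠ i)).val.bind fun k => rowMS κ k j :=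
  (Multiset.map_bind (univ.filter (· ≠ i)).val
    (fun k => (univ.filter (· ≠ j)).val.map (Prod.mk k)) fun p => κ p.1 p.2).trans
      (by simp only [rowMS, Multiset.map_map]; rfl)

theorem bind_fullRowMS_eq_add (κ : Fin m → Fin n → X) (i : Fin m) (j : Fin n) :
    univ.val.bind (fullRowMS κ) = fullRowMS κ i + colMS κ i j + diagMS κ i j := by
  rw [univ_val_eq_cons_filter_ne i, Multiset.cons_bind, add_assoc, diagMS_eq_bind_rowMS, colMS]
  simp only [fullRowMS_eq_cons κ _ j, Multiset.bind_cons]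

theorem isBalanced_iff_fullRowMS_eq (κ : Fin m → Fin n → X) :
    IsBalanced κ ↔ ∀ i j k l, κ i j = κ k l →
      fullRowMS κ i = fullRowMS κ k ∧ fullRowMS (swap κ) j = fullRowMS (swap κ) l := by
  refine forall₄_congr fun i j k l => imp_congr_right fun h => ?_
  rw [fullRowMS_eq_cons κ i j, fullRowMS_eq_cons κ k l, fullRowMS_swap_eq_cons κ i j,
    fullRowMS_swap_eq_cons κ k l, h, Multiset.cons_inj_right, Multiset.cons_inj_right]
  refine ⟨fun ⟨hrow, hcol, _⟩ => ⟨hrow, hcol⟩, fun ⟨hrow, hcol⟩ => ⟨hrow, hcol, ?_⟩⟩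
  have hdiag := (bind_fullRowMS_eq_add κ i j).symm.trans (bind_fullRowMS_eq_add κ k l)
  rw [fullRowMS_eq_cons κ i j, fullRowMS_eq_cons κ k l, h, hrow, hcol] at hdiag
  exact add_left_cancel hdiag

end Balanced

/-- a coloring of the `m × n` array is balanced iff there are partitions of
the rows into classes `R_1, …, R_s` (encoded by a surjection `R : Fin m → Fin s`) and of
the columns into classes `C_1, …, C_t` such that each block `R_a × C_b` is a Latin
rectangle and distinct blocks use disjoint sets of colors. -/
theorem balanced_iff_latin_rectangle_decomposition (m n : ℕ) {X : Type*} [DecidableEq X]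
    (κ : Fin m → Fin n → X) :
    IsBalanced κ ↔
      ∃ (s t : ℕ) (R : Fin m → Fin s) (C : Fin n → Fin t),
        Function.Surjective R ∧ Function.Surjective C ∧
        -- (i) each block is a Latin rectangle:
        -- each color appears the same number of times in every row of a block
        (∀ (a : Fin s) (b : Fin t) (i i' : Fin m), R i = a → R i' = a → ∀ c : X,
          ((Finset.univ.filter (fun j => C j = b ∧ κ i j = c)).card =
            (Finset.univ.filter (fun j => C j = b ∧ κ i' j = c)).card)) ∧
        -- and the same number of times in every column of a block
        (∀ (a : Fin s) (b : Fin t) (j j' : Fin n), C j = b → C j' = b → ∀ c : X,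
          ((Finset.univ.filter (fun i => R i = a ∧ κ i j = c)).card =
            (Finset.univ.filter (fun i => R i = a ∧ κ i j' = c)).card)) ∧
        -- (ii) distinct blocks use disjoint sets of colors
        (∀ (i k : Fin m) (j l : Fin n), κ i j = κ k l → R i = R k ∧ C j = C l) := by
  rw [isBalanced_iff_fullRowMS_eq]
  constructor
  · intro hκ
    obtain ⟨s, R, hRsurj, hR⟩ := exists_surjective_fin_eq_iff (fullRowMS κ)
    obtain ⟨t, C, hCsurj, hC⟩ := exists_surjective_fin_eq_iff (fullRowMS (swap κ))
    have hRκ : ∀ i j k l, κ i j = κ k l → R i = R k :=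
      fun i j k l h => (hR i k).2 (hκ i j k l h).1
    have hCκ : ∀ i j k l, κ i j = κ k l → C j = C l :=
      fun i j k l h => (hC j l).2 (hκ i j k l h).2
    refine ⟨s, t, R, C, hRsurj, hCsurj, ?_, ?_, fun i k j l h => ⟨hRκ i j k l h, hCκ i j k l h⟩⟩
    · rintro a b i i' rfl hi' c
      exact (fullRowMS_eq_iff_card_filter_and_eq κ C hCκ i i').1 ((hR i i').1 hi'.symm) b c
    · rintro a b j j' rfl hj' c
      exact (fullRowMS_eq_iff_card_filter_and_eq (swap κ) R (fun j i l k h => hRκ i j k l h) j j').1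
        ((hC j j').1 hj'.symm) a c
  · rintro ⟨s, t, R, C, -, -, hrow, hcol, hdisj⟩ i j k l h
    obtain ⟨hik, hjl⟩ := hdisj i k j l h
    exact ⟨(fullRowMS_eq_iff_card_filter_and_eq κ C (fun i j k l h => (hdisj i k j l h).2) i k).2
        fun b c => hrow _ b i k rfl hik.symm c,
      (fullRowMS_eq_iff_card_filter_and_eq (swap κ) R (fun j i l k h => (hdisj i k j l h).1) j l).2
        fun a c => hcol a _ j l rfl hjl.symm c⟩
end

section
/- Let κ be a coloring of the 4×n array using exactly two colors R and B that is a Latin rectangle, in which every column contains exactly two entries of color R (so R and B occur in equal proportions). For a 2-element subset p of {1,2,3,4}, let ν(p) denote the number of columns whose R entries lie exactly in the rows of p or exactly in the rows of pᶜ (the multiplicity of the color-complementary pair {p, pᶜ}). Suppose there exist 2-element subsets p and q with q ∉ {p, pᶜ}, ν(p) ≥ 1, ν(q) ≥ 1, and ν(p) ≠ ν(q). Then κ is exotic: there is no subgroup H of S_4 × S_n whose orbits on positions are exactly the two color classes of κ. -/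
open Finset

/-- The coloring `κ` of a rectangular array is a Latin rectangle: each color appears the
same number of times in every row and the same number of times in every column. -/
def IsLatin {m n : ℕ} {X : Type*} [DecidableEq X] (κ : Fin m → Fin n → X) : Prop :=
  (∀ (c : X) (i i' : Fin m),
    (Finset.univ.filter (fun j => κ i j = c)).card =
      (Finset.univ.filter (fun j => κ i' j = c)).card) ∧
  (∀ (c : X) (j j' : Fin n),
    (Finset.univ.filter (fun i => κ i j = c)).card =
      (Finset.univ.filter (fun i => κ i j' = c)).card)

/-!
Since the `R` cells form one orbit, some element of `H` carries an `R` cell of a `{p, pᶜ}`-column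
to an `R` cell of a `{q, qᶜ}`-column. Elements of `H` preserve the coloring, so its column
permutation maps the `{p, pᶜ}`-columns bijectively onto the `{q, qᶜ}`-columns, forcing `ν p = ν q`.
-/

def IsOrbitalVia {α β X : Type*} (H : Subgroup (Equiv.Perm α × Equiv.Perm β))
    (κ : α → β → X) : Prop :=
  ∀ (i k : α) (j l : β), (∃ h ∈ H, h.1 i = k ∧ h.2 j = l) ↔ κ i j = κ k l

theorem IsOrbitalVia.apply_apply_eq {α β X : Type*}
    {H : Subgroup (Equiv.Perm α × Equiv.Perm β)} {κ : α → β → X} (hH : IsOrbitalVia H κ)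
    {g : Equiv.Perm α × Equiv.Perm β} (hg : g ∈ H) (i : α) (j : β) :
    κ (g.1 i) (g.2 j) = κ i j :=
  ((hH i (g.1 i) j (g.2 j)).mp ⟨g, hg, rfl, rfl⟩).symm

section ColumnTypes

variable {α β X : Type*} [Fintype α] [DecidableEq X]

def rowsOfColor (κ : α → β → X) (c : X) (j : β) : Finset α :=
  univ.filter fun i => κ i j = c

variable {κ : α → β → X} {c : X}

theorem rowsOfColor_apply {σ : Equiv.Perm α} {τ : Equiv.Perm β}
    (hστ : ∀ i j, κ (σ i) (τ j) = κ i j) (j : β) :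
    rowsOfColor κ c (τ j) = (rowsOfColor κ c j).map σ.toEmbedding := by
  ext k
  simp only [mem_map_equiv, rowsOfColor, mem_filter, mem_univ, true_and]
  rw [← hστ (σ.symm k) j, Equiv.apply_symm_apply]

variable [DecidableEq α] [Fintype β]

def pairMultiplicity (κ : α → β → X) (c : X) (p : Finset α) : ℕ :=
  #(univ.filter fun j => rowsOfColor κ c j = p ∨ rowsOfColor κ c j = pᶜ)

theorem pairMultiplicity_compl (p : Finset α) :
    pairMultiplicity κ c pᶜ = pairMultiplicity κ c p := by
  simp only [pairMultiplicity, compl_compl, or_comm]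

theorem pairMultiplicity_rowsOfColor_eq {p : Finset α} {j : β}
    (hj : rowsOfColor κ c j = p ∨ rowsOfColor κ c j = pᶜ) :
    pairMultiplicity κ c (rowsOfColor κ c j) = pairMultiplicity κ c p := by
  rcases hj with hj | hj <;> rw [hj]
  exact pairMultiplicity_compl p

theorem exists_rowsOfColor_of_one_le_pairMultiplicity {p : Finset α}
    (hp : 1 ≤ pairMultiplicity κ c p) :
    ∃ j, rowsOfColor κ c j = p ∨ rowsOfColor κ c j = pᶜ := by
  obtain ⟨j, hj⟩ := card_pos.mp hp
  exact ⟨j, (mem_filter.mp hj).2⟩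

theorem pairMultiplicity_map {σ : Equiv.Perm α} {τ : Equiv.Perm β}
    (hστ : ∀ i j, κ (σ i) (τ j) = κ i j) (p : Finset α) :
    pairMultiplicity κ c (p.map σ.toEmbedding) = pairMultiplicity κ c p := by
  have hcompl : (p.map σ.toEmbedding)ᶜ = pᶜ.map σ.toEmbedding := by
    ext k; simp [mem_map_equiv]
  refine (card_equiv τ fun j => ?_).symm
  simp only [mem_filter, mem_univ, true_and, rowsOfColor_apply hστ, hcompl,
    (map_injective σ.toEmbedding).eq_iff]

theorem IsOrbitalVia.pairMultiplicity_rowsOfColor_eq {H : Subgroup (Equiv.Perm α × Equiv.Perm β)}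
    (hH : IsOrbitalVia H κ) {i i' : α} {j j' : β}
    (hi : i ∈ rowsOfColor κ c j) (hi' : i' ∈ rowsOfColor κ c j') :
    pairMultiplicity κ c (rowsOfColor κ c j) = pairMultiplicity κ c (rowsOfColor κ c j') := by
  rw [rowsOfColor, mem_filter] at hi hi'
  obtain ⟨g, hg, -, rfl⟩ := (hH i i' j j').mpr (hi.2.trans hi'.2.symm)
  rw [rowsOfColor_apply (hH.apply_apply_eq hg), pairMultiplicity_map (hH.apply_apply_eq hg)]

end ColumnTypes

theorem different_multiplicities_implies_exotic_general (n : ℕ) {X : Type*} [DecidableEq X]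
    (κ : Fin 4 → Fin n → X) (R : X)
    (hcol : ∀ j, (Finset.univ.filter (fun i => κ i j = R)).card = 2)
    (ν : Finset (Fin 4) → ℕ)
    (hν : ∀ p : Finset (Fin 4), ν p = (Finset.univ.filter
      (fun j : Fin n => Finset.univ.filter (fun i => κ i j = R) = p ∨
        Finset.univ.filter (fun i => κ i j = R) = pᶜ)).card)
    (p q : Finset (Fin 4))
    (hνp : 1 ≤ ν p) (hνq : 1 ≤ ν q) (hne : ν p ≠ ν q) :
    ¬ ∃ H : Subgroup (Equiv.Perm (Fin 4) × Equiv.Perm (Fin n)),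
        ∀ (i k : Fin 4) (j l : Fin n),
          (∃ h ∈ H, h.1 i = k ∧ h.2 j = l) ↔ κ i j = κ k l := by
  rintro ⟨H, hH⟩
  obtain rfl : ν = pairMultiplicity κ R := funext hν
  have hnonempty (j : Fin n) : (rowsOfColor κ R j).Nonempty := card_pos.mp (by
    rw [rowsOfColor, hcol]; norm_num)
  obtain ⟨j, hj⟩ := exists_rowsOfColor_of_one_le_pairMultiplicity hνp
  obtain ⟨j', hj'⟩ := exists_rowsOfColor_of_one_le_pairMultiplicity hνq
  obtain ⟨i, hi⟩ := hnonempty j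
  obtain ⟨i', hi'⟩ := hnonempty j'
  apply hne
  rw [← pairMultiplicity_rowsOfColor_eq hj, ← pairMultiplicity_rowsOfColor_eq hj']
  exact IsOrbitalVia.pairMultiplicity_rowsOfColor_eq hH hi hi'

/-- a `4 × n` two-color Latin rectangle in which every column has exactly
two `R` entries, and in which two color-complementary pairs of column types both occur
but with different multiplicities, is exotic: no subgroup of `S_4 × S_n` has the two
color classes as its orbits on positions. -/
theorem different_multiplicities_implies_exotic (n : ℕ) {X : Type*} [DecidableEq X]
    (κ : Fin 4 → Fin n → X) (R B : X) (hRB : R ≠ B)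
    (htwo : ∀ i j, κ i j = R ∨ κ i j = B)
    (hRocc : ∃ i j, κ i j = R) (hBocc : ∃ i j, κ i j = B)
    (hlatin : IsLatin κ)
    (hcol : ∀ j, (Finset.univ.filter (fun i => κ i j = R)).card = 2)
    (ν : Finset (Fin 4) → ℕ)
    (hν : ∀ p : Finset (Fin 4), ν p = (Finset.univ.filter
      (fun j : Fin n => Finset.univ.filter (fun i => κ i j = R) = p ∨
        Finset.univ.filter (fun i => κ i j = R) = pᶜ)).card)
    (p q : Finset (Fin 4)) (hp : p.card = 2) (hq : q.card = 2)
    (hqp : q ≠ p) (hqpc : q ≠ pᶜ)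
    (hνp : 1 ≤ ν p) (hνq : 1 ≤ ν q) (hne : ν p ≠ ν q) :
    ¬ ∃ H : Subgroup (Equiv.Perm (Fin 4) × Equiv.Perm (Fin n)),
        ∀ (i k : Fin 4) (j l : Fin n),
          (∃ h ∈ H, h.1 i = k ∧ h.2 j = l) ↔ κ i j = κ k l :=
  different_multiplicities_implies_exotic_general n κ R hcol ν hν p q hνp hνq hne
end
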